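/- arXiv:2003.14068 — 6 statements merged into one kernel-verified Lean document; each statement's English description precedes it below -/
import Mathlib

section
/- Let F : F_{2^n} → F_{2^n} and suppose no permutation of the form F(x) + L(x) exists for any non-zero F_2-linear map L. Then every permutation of F_{2^n} that is EA-equivalent to F is already affine equivalent to F. -/
noncomputable section

abbrev K (n : ℕ) := GaloisField 2 n

noncomputable instance (n : ℕ) : Fintype (K n) := Fintype.ofFinite _

/-- The absolute trace of `F_{2^n}` to `F_2`. -/
def tr (n : ℕ) : K n →ₗ[ZMod 2] ZMod 2 := Algebra.trace (ZMod 2) (K n)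

/-- The additive character `x ↦ (-1)^{Tr(x)}`. -/
def chi (n : ℕ) (x : K n) : ℤ := (-1) ^ (tr n x).val

/-- The Kloosterman sum. -/
def Kl (n : ℕ) (a : K n) : ℤ := ∑ x : K n, chi n (x⁻¹ + a * x)

/-- The Walsh transform of `F`. -/
def W (n : ℕ) (F : K n → K n) (a b : K n) : ℤ := ∑ x : K n, chi n (a * F x + b * x)

/-- The quadratic form `Q(x) = ∑_{0 ≤ i < j < n} x^{2^i + 2^j}`. -/
def Qf (n : ℕ) (x : K n) : K n := ∑ i ∈ Finset.range n, ∑ j ∈ Finset.Ioo i n, x ^ (2^i + 2^j)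

/-- `A` is an affine map, i.e. a linear map plus a constant. -/
def IsAffineMap {n : ℕ} (A : K n → K n) : Prop :=
  ∃ (L : K n →ₗ[ZMod 2] K n) (c : K n), ∀ x, A x = L x + c

/-- `F` and `G` are EA-equivalent: `A1(F(A2 x)) + A3 x = G x` with `A1, A2` affine
permutations and `A3` affine. -/
def EAEquiv {n : ℕ} (F G : K n → K n) : Prop :=
  ∃ A1 A2 A3 : K n → K n,
    IsAffineMap A1 ∧ IsAffineMap A2 ∧ IsAffineMap A3 ∧
    Function.Bijective A1 ∧ Function.Bijective A2 ∧
    ∀ x, A1 (F (A2 x)) + A3 x = G x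

/-- `F` and `G` are affine equivalent: the case `A3 = 0` of EA-equivalence. -/
def AffEquiv {n : ℕ} (F G : K n → K n) : Prop :=
  ∃ A1 A2 : K n → K n,
    IsAffineMap A1 ∧ IsAffineMap A2 ∧
    Function.Bijective A1 ∧ Function.Bijective A2 ∧
    ∀ x, A1 (F (A2 x)) = G x


open Function

section
variable {R V : Type*} [Semiring R] [AddCommGroup V] [Module R V]

theorem bijective_linear_of_bijective_add_const {A : V → V} {L : V →ₗ[R] V} {c : V}
    (hA : ∀ x, A x = L x + c) (hbij : Bijective A) : Bijective L := by
  have : ⇑L = (· - c) ∘ A := funext fun x => by simp [hA]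
  exact this ▸ (Equiv.subRight c).bijective.comp hbij

theorem bijective_of_bijective_linearEquiv_comp_add_const {f A : V → V} (e : V ≃ₗ[R] V)
    (c : V) (hA : Bijective A) (h : Bijective fun x => e (f (A x)) + c) : Bijective f := by
  have hcomp : (fun x => e (f (A x)) + c) = ((· + c) ∘ e) ∘ f ∘ A := rfl
  rw [hcomp] at h
  exact (Bijective.of_comp_iff f hA).1
    ((Bijective.of_comp_iff' ((Equiv.addRight c).bijective.comp e.bijective) _).1 h)

end

theorem stmt0 {n : ℕ} (F : K n → K n)
    (hF : ∀ L : K n →ₗ[ZMod 2] K n, L ≠ 0 →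
      ¬ Function.Bijective (fun x => F x + L x)) :
    ∀ G : K n → K n, Function.Bijective G → EAEquiv F G → AffEquiv F G := by
  rintro G hG ⟨A1, A2, A3, ⟨L1, c1, h1⟩, ⟨L2, c2, h2⟩, ⟨L3, c3, h3⟩, hA1, hA2, heq⟩
  set e1 := LinearEquiv.ofBijective L1 (bijective_linear_of_bijective_add_const h1 hA1)
  set e2 := LinearEquiv.ofBijective L2 (bijective_linear_of_bijective_add_const h2 hA2)
  -- With `N := L1⁻¹ ∘ L3 ∘ L2⁻¹` one has `G x = L1 ((F + N) (A2 x)) + const`, so `F + N`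
  -- is a permutation and the hypothesis forces `N = 0`, i.e. `A3` is constant.
  set N := e1.symm.toLinearMap ∘ₗ L3 ∘ₗ e2.symm.toLinearMap
  have hL3N : L3 = e1.toLinearMap ∘ₗ N ∘ₗ e2.toLinearMap := by ext; simp [N]
  have hFN : Bijective fun x => F x + N x := by
    refine bijective_of_bijective_linearEquiv_comp_add_const e1 (c1 + c3 - e1 (N c2)) hA2 ?_
    convert hG using 1
    funext x
    rw [← heq, h1, h2, h3, hL3N]
    simp only [map_add, LinearEquiv.ofBijective_apply, LinearMap.coe_comp, LinearEquiv.coe_coe,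
      comp_apply, e1, e2]
    abel
  have hL3 : L3 = 0 := by
    have hN : N = 0 := by_contra fun h => hF N h hFN
    simp [hL3N, hN]
  refine ⟨fun x => A1 x + c3, A2, ⟨L1, c1 + c3, fun x => by simp only [h1, add_assoc]⟩,
    ⟨L2, c2, h2⟩, (Equiv.addRight c3).bijective.comp hA1, hA2, fun x => ?_⟩
  simpa [h3, hL3] using heq x
end
end

section
/- Let F : F_{2^n} → F_{2^n} and suppose no permutation of the form L1(F(x)) + L2(x) exists with both L1, L2 non-zero F_2-linear maps. Then every function CCZ-equivalent to F is EA-equivalent to F or (if F is bijective) to F^{-1}. -/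
noncomputable section

/-- CCZ-equivalence: a linear bijection of the plane maps the graph of `F` onto a
translate of the graph of `G`. -/
def CCZEquiv {n : ℕ} (F G : K n → K n) : Prop :=
  ∃ (α β γ δ : K n →ₗ[ZMod 2] K n) (a b : K n),
    Function.Bijective (fun p : K n × K n => (α p.1 + β p.2, γ p.1 + δ p.2)) ∧
    (fun p : K n × K n => (α p.1 + β p.2 + a, γ p.1 + δ p.2 + b)) ''
      {p : K n × K n | p.2 = F p.1} = {p : K n × K n | p.2 = G p.1}

/-!
Write a CCZ-equivalence as `L(x, y) = (α x + β y, γ x + δ y)` followed by the translation by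
`(a, b)`. Since `L` maps the graph of `F` onto a translate of the graph of `G`, the map
`φ x = α x + β (F x) + a` is a permutation and `G (φ x) = γ x + δ (F x) + b`.
If `β = 0`, then `α` and `δ` are linear permutations and this exhibits an EA-equivalence
between `F` and `G`. If `β ≠ 0`, then `x ↦ β (F x) + α x` is a permutation, so the hypothesis
on `F` forces `α = 0`; then `β ∘ F` is bijective, hence so are `β`, `F` and `γ`, and
substituting `x = F⁻¹ u` gives an EA-equivalence between `F⁻¹` and `G`.
-/

open Function

theorem bijective_fst_of_image_graph_eq_graph {X Y X' Y' : Type*} {f : X × Y → X' × Y'}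
    (hf : Injective f) {F : X → Y} {G : X' → Y'}
    (h : f '' {p | p.2 = F p.1} = {p | p.2 = G p.1}) :
    Bijective (fun x => (f (x, F x)).1) ∧ ∀ x, G (f (x, F x)).1 = (f (x, F x)).2 := by
  have graph : ∀ x, G (f (x, F x)).1 = (f (x, F x)).2 := fun x =>
    (show f (x, F x) ∈ {p : X' × Y' | p.2 = G p.1} from h ▸ ⟨(x, F x), rfl, rfl⟩).symm
  refine ⟨⟨fun x x' hxx' => ?_, fun y => ?_⟩, graph⟩
  · have : f (x, F x) = f (x', F x') :=
      Prod.ext hxx' (by rw [← graph, ← graph]; exact congrArg G hxx')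
    exact congrArg Prod.fst (hf this)
  · obtain ⟨p, hp, hpy⟩ : (y, G y) ∈ f '' {p | p.2 = F p.1} := h ▸ rfl
    have hp' : (p.1, F p.1) = p := Prod.ext rfl hp.symm
    exact ⟨p.1, by simp only [hp', hpy]⟩

section BlockTriangular

variable {R M N : Type*} [Semiring R] [AddCommMonoid M] [AddCommMonoid N] [Module R M]
  [Module R N] {α : M →ₗ[R] M} {β : N →ₗ[R] M} {γ : M →ₗ[R] N} {δ : N →ₗ[R] N}

theorem injective_lowerRight_of_upperRight_eq_zero
    (hL : Injective (fun p : M × N => (α p.1 + β p.2, γ p.1 + δ p.2))) (hβ : β = 0) :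
    Injective δ := fun y y' h =>
  congrArg Prod.snd (@hL (0, y) (0, y') (by simp [hβ, h]))

theorem injective_lowerLeft_of_upperLeft_eq_zero
    (hL : Injective (fun p : M × N => (α p.1 + β p.2, γ p.1 + δ p.2))) (hα : α = 0) :
    Injective γ := fun x x' h =>
  congrArg Prod.fst (@hL (x, 0) (x', 0) (by simp [hα, h]))

end BlockTriangular

theorem bijective_of_bijective_add_const {M : Type*} [AddGroup M] {f : M → M} (c : M)
    (hf : Bijective (fun x => f x + c)) : Bijective f :=
  (Bijective.of_comp_iff' (AddGroup.addRight_bijective c) f).mp hf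

theorem isAffineMap_linear_add {n : ℕ} (L : K n →ₗ[ZMod 2] K n) (c : K n) :
    IsAffineMap (fun x => L x + c) :=
  ⟨L, c, fun _ => rfl⟩

theorem eaEquiv_of_apply_affine_eq {n : ℕ} {F G : K n → K n} {A B C : K n →ₗ[ZMod 2] K n}
    (hA : Bijective A) (hB : Bijective B) (a c : K n)
    (h : ∀ x, G (A x + a) = B (F x) + C x + c) : EAEquiv F G := by
  let e := LinearEquiv.ofBijective A hA
  refine ⟨fun y => B y + c, fun x => e.symm x + -e.symm a, fun x => C (e.symm x) + C (-e.symm a),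
    isAffineMap_linear_add B c, isAffineMap_linear_add e.symm.toLinearMap _,
    isAffineMap_linear_add (C ∘ₗ e.symm.toLinearMap) _, (AddGroup.addRight_bijective c).comp hB,
    (AddGroup.addRight_bijective _).comp e.symm.bijective, fun x => ?_⟩
  set y := e.symm x + -e.symm a
  have hAe : ∀ z, A (e.symm z) = z := e.apply_symm_apply
  have hy : A y + a = x := by rw [map_add, map_neg, hAe, hAe, neg_add_cancel_right]
  calc B (F y) + c + (C (e.symm x) + C (-e.symm a)) = B (F y) + C y + c := by
        rw [map_add C]; abel
    _ = G x := by rw [← h, hy]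

theorem stmt1 {n : ℕ} (F : K n → K n)
    (hF : ∀ L1 L2 : K n →ₗ[ZMod 2] K n, L1 ≠ 0 → L2 ≠ 0 →
      ¬ Function.Bijective (fun x => L1 (F x) + L2 x)) :
    ∀ G : K n → K n, CCZEquiv F G →
      EAEquiv F G ∨ (Function.Bijective F ∧ EAEquiv (Function.invFun F) G) := by
  rintro G ⟨α, β, γ, δ, a, b, hL, hset⟩
  obtain ⟨hφ, hG⟩ := bijective_fst_of_image_graph_eq_graph (fun p q hpq =>
    hL.injective (by simpa only [Prod.mk.injEq, add_left_inj] using hpq)) hset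
  simp only at hφ hG
  by_cases hβ : β = 0
  · simp only [hβ, LinearMap.zero_apply, add_zero] at hφ hG
    have hδ := (injective_lowerRight_of_upperRight_eq_zero hL.injective hβ).bijective_of_finite
    exact .inl <| eaEquiv_of_apply_affine_eq (bijective_of_bijective_add_const a hφ) hδ a b
      fun x => by rw [hG, add_comm (γ x)]
  have hα : α = 0 := by
    by_contra hα
    refine hF β α hβ hα (bijective_of_bijective_add_const a ?_)
    simpa only [add_comm (α _)] using hφ
  simp only [hα, LinearMap.zero_apply, zero_add] at hφ hG
  have hβF := bijective_of_bijective_add_const a hφ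
  have hβbij : Bijective β :=
    (Surjective.of_comp (g := F) hβF.surjective).bijective_of_finite
  have hFbij : Bijective F := (Bijective.of_comp_iff' hβbij F).mp hβF
  have hγ := (injective_lowerLeft_of_upperLeft_eq_zero hL.injective hα).bijective_of_finite
  refine .inr ⟨hFbij, eaEquiv_of_apply_affine_eq (C := δ) hβbij hγ a b fun u => ?_⟩
  have hu : F (invFun F u) = u := rightInverse_invFun hFbij.surjective u
  rw [← hu, hG, hu]
end
end

section
/- Let F : F_{2^n} → F_{2^n} and let L1, L2 : F_{2^n} → F_{2^n} be F_2-linear. Then x ↦ L1(F(x)) + L2(x) is a permutation of F_{2^n} if and only if W_F(L1*(b), L2*(b)) = 0 for all b ∈ F_{2^n} with b ≠ 0, where W_F(a,b) = Σ_{x ∈ F_{2^n}} (-1)^{Tr(aF(x)+bx)} is the Walsh transform and L* denotes the adjoint of L with respect to the trace bilinear form Tr(xy). -/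
noncomputable section
open scoped Classical

lemma chi_eq_of_tr (n : ℕ) {x y : K n} (h : tr n x = tr n y) : chi n x = chi n y := by
  unfold chi; rw [h]

lemma chi_add (n : ℕ) (x y : K n) : chi n (x + y) = chi n x * chi n y := by
  have h : ∀ a b : ZMod 2, ((-1:ℤ))^((a+b).val) = (-1)^a.val * (-1)^b.val := by decide
  simpa [chi, map_add] using h (tr n x) (tr n y)

lemma chi_zero (n : ℕ) : chi n 0 = 1 := by simp [chi]

lemma chi_neg (n : ℕ) (x : K n) : chi n (-x) = chi n x := by
  have h : ∀ a : ZMod 2, ((-1:ℤ))^((-a).val) = (-1)^a.val := by decide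
  simpa [chi, map_neg] using h (tr n x)

lemma sum_chi (n : ℕ) : ∑ x : K n, chi n x = 0 := by
  obtain ⟨c, hc⟩ := Algebra.trace_surjective (ZMod 2) (K n) 1
  have hc' : chi n c = -1 := by
    show ((-1:ℤ)) ^ (tr n c).val = -1
    rw [show tr n c = 1 from hc]; decide
  have hS : ∑ x : K n, chi n (x + c) = ∑ x : K n, chi n x :=
    Fintype.sum_equiv (Equiv.addRight c) _ _ (fun x => rfl)
  have : ∑ x : K n, chi n (x + c) = -∑ x : K n, chi n x := by
    simp [chi_add, hc', Finset.sum_neg_distrib]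
  linarith [hS, this]

lemma sum_chi_mul_left (n : ℕ) (b : K n) (hb : b ≠ 0) : ∑ x : K n, chi n (b * x) = 0 := by
  have := Fintype.sum_equiv (Equiv.mulLeft₀ b hb) (fun x => chi n (b * x)) (chi n) (fun x => rfl)
  rw [this]; exact sum_chi n

lemma sum_chi_mul_right (n : ℕ) (u : K n) (hu : u ≠ 0) : ∑ b : K n, chi n (b * u) = 0 := by
  have := Fintype.sum_equiv (Equiv.mulRight₀ u hu) (fun b => chi n (b * u)) (chi n) (fun b => rfl)
  rw [this]; exact sum_chi n

lemma orth (n : ℕ) (u : K n) :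
    ∑ b : K n, chi n (b * u) = if u = 0 then (Fintype.card (K n) : ℤ) else 0 := by
  by_cases hu : u = 0
  · simp [hu, chi_zero]
  · simp [hu, sum_chi_mul_right n u hu]

lemma bij_iff (n : ℕ) (G : K n → K n) :
    Function.Bijective G ↔ ∀ b : K n, b ≠ 0 → ∑ x : K n, chi n (b * G x) = 0 := by
  constructor
  · intro hG b hb
    have e := Fintype.sum_bijective G hG (fun x => chi n (b * G x)) (fun y => chi n (b * y))
      (fun x => rfl)
    rw [e]
    exact sum_chi_mul_left n b hb
  · intro h
    rw [Function.bijective_iff_existsUnique]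
    intro y
    set T := ∑ x : K n, ∑ b : K n, chi n (b * (G x - y)) with hT
    have key1 : T = (Fintype.card (K n) : ℤ) *
        ((Finset.univ.filter (fun x => G x = y)).card : ℤ) := by
      rw [hT]
      have : ∀ x : K n, ∑ b : K n, chi n (b * (G x - y)) =
          if G x = y then (Fintype.card (K n) : ℤ) else 0 := by
        intro x
        rw [orth n (G x - y)]
        simp [sub_eq_zero]
      simp only [this]
      rw [Finset.sum_ite, Finset.sum_const, Finset.sum_const]
      simp [mul_comm]
    have key2 : T = (Fintype.card (K n) : ℤ) := by
      rw [hT, Finset.sum_comm]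
      have hterm : ∀ b x : K n, chi n (b * (G x - y)) = chi n (b * G x) * chi n (b * y) := by
        intro b x
        have e : b * (G x - y) = b * G x + -(b * y) := by ring
        rw [e, chi_add, chi_neg]
      rw [Fintype.sum_eq_single 0]
      · simp [chi_zero]
      · intro b hb
        calc ∑ x : K n, chi n (b * (G x - y))
            = (∑ x : K n, chi n (b * G x)) * chi n (b * y) := by
              rw [Finset.sum_mul]; exact Finset.sum_congr rfl fun x _ => hterm b x
          _ = 0 := by rw [h b hb, zero_mul]
    have hcard : ((Finset.univ.filter (fun x => G x = y)).card : ℤ) = 1 := by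
      have hq : (Fintype.card (K n) : ℤ) ≠ 0 := by
        exact_mod_cast Fintype.card_ne_zero
      have heq : (Fintype.card (K n) : ℤ) * ((Finset.univ.filter (fun x => G x = y)).card : ℤ)
          = (Fintype.card (K n) : ℤ) * 1 := by
        rw [mul_one, ← key1, key2]
      exact mul_left_cancel₀ hq heq
    have hcard' : (Finset.univ.filter (fun x => G x = y)).card = 1 := by exact_mod_cast hcard
    obtain ⟨a, ha⟩ := Finset.card_eq_one.mp hcard'
    refine ⟨a, ?_, ?_⟩
    · have : a ∈ Finset.univ.filter (fun x => G x = y) := ha ▸ Finset.mem_singleton_self a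
      exact (Finset.mem_filter.mp this).2
    · intro x hx
      have : x ∈ Finset.univ.filter (fun x => G x = y) := Finset.mem_filter.mpr ⟨Finset.mem_univ x, hx⟩
      rw [ha] at this
      exact Finset.mem_singleton.mp this

theorem stmt2 {n : ℕ} (F : K n → K n) (L1 L2 L1s L2s : K n →ₗ[ZMod 2] K n)
    (h1 : ∀ x y, tr n (L1 x * y) = tr n (x * L1s y))
    (h2 : ∀ x y, tr n (L2 x * y) = tr n (x * L2s y)) :
    Function.Bijective (fun x => L1 (F x) + L2 x) ↔
      ∀ b : K n, b ≠ 0 → W n F (L1s b) (L2s b) = 0 := by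
  have hw : ∀ b : K n, ∑ x : K n, chi n (b * (L1 (F x) + L2 x)) = W n F (L1s b) (L2s b) := by
    intro b
    unfold W
    refine Finset.sum_congr rfl fun x _ => chi_eq_of_tr n ?_
    have e : b * (L1 (F x) + L2 x) = L1 (F x) * b + L2 x * b := by ring
    rw [e, map_add, h1, h2, ← map_add]
    congr 1; ring
  rw [bij_iff n (fun x => L1 (F x) + L2 x)]
  exact forall_congr' fun b => imp_congr_right fun hb => by rw [hw b]
end
end

section
/- Let Q : F_{2^n} → F_2 be the quadratic form Q(x) = Σ_{0 ≤ i < j < n} x^{2^i + 2^j}. Then the associated bilinear form B_Q(x,y) = Q(x) + Q(y) + Q(x+y) satisfies B_Q(x,y) = Tr(xy) + Tr(x)Tr(y) for all x, y ∈ F_{2^n}. -/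
/-!
In characteristic `2`, `(x + y) ^ (2^i + 2^j) = (x^(2^i) + y^(2^i)) (x^(2^j) + y^(2^j))`, so the polar
form of `Q` is `∑_{i < j} (x^(2^i) y^(2^j) + x^(2^j) y^(2^i)) = ∑_{i ≠ j} x^(2^i) y^(2^j)`. Adding
the diagonal twice (which changes nothing) turns it into
`(∑ x^(2^i)) (∑ y^(2^j)) + ∑ (x y)^(2^i) = Tr x Tr y + Tr (x y)`, by the Frobenius formula for the trace.
-/

noncomputable section

open Finset

theorem Finset.sum_range_succ_sum_Ioo {M : Type*} [AddCommMonoid M] (f : ℕ → ℕ → M) (m : ℕ) :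
    ∑ i ∈ range (m + 1), ∑ j ∈ Ioo i (m + 1), f i j =
      ∑ i ∈ range m, ∑ j ∈ Ioo i m, f i j + ∑ i ∈ range m, f i m := by
  rw [sum_range_succ, Ioo_add_one_right_eq_Ioc, Ioc_self, sum_empty, add_zero, ← sum_add_distrib]
  refine sum_congr rfl fun i hi => ?_
  rw [Ioo_add_one_right_eq_Ioc, ← Ioo_insert_right (mem_range.mp hi), sum_insert right_notMem_Ioo,
    add_comm]

theorem Finset.sum_range_mul_sum_range {R : Type*} [CommSemiring R] (a b : ℕ → R) (m : ℕ) :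
    (∑ i ∈ range m, a i) * ∑ i ∈ range m, b i =
      ∑ i ∈ range m, a i * b i + ∑ i ∈ range m, ∑ j ∈ Ioo i m, (a i * b j + a j * b i) := by
  induction m with
  | zero => simp
  | succ m ih =>
    rw [sum_range_succ_sum_Ioo, sum_range_succ, sum_range_succ, sum_range_succ, add_mul, mul_add,
      mul_add, ih, sum_add_distrib, sum_mul, mul_sum]
    ring

def pairPowSum {R : Type*} [CommSemiring R] (m : ℕ) (z : R) : R :=
  ∑ i ∈ range m, ∑ j ∈ Ioo i m, z ^ (2 ^ i + 2 ^ j)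

theorem pairPowSum_one {R : Type*} [CommSemiring R] (z : R) : pairPowSum 1 z = 0 := by
  simp [pairPowSum, show Ioo 0 1 = ∅ by rfl]

section CharTwo

variable {R : Type*} [CommRing R] [CharP R 2]

theorem add_pow_two_pow_add_two_pow (x y : R) (i j : ℕ) :
    (x + y) ^ (2 ^ i + 2 ^ j) = x ^ (2 ^ i + 2 ^ j) + y ^ (2 ^ i + 2 ^ j) +
      (x ^ 2 ^ i * y ^ 2 ^ j + x ^ 2 ^ j * y ^ 2 ^ i) := by
  rw [pow_add, add_pow_char_pow, add_pow_char_pow]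
  ring

theorem pairPowSum_polar (m : ℕ) (x y : R) :
    pairPowSum m x + pairPowSum m y + pairPowSum m (x + y) =
      ∑ i ∈ range m, (x * y) ^ 2 ^ i + (∑ i ∈ range m, x ^ 2 ^ i) * ∑ i ∈ range m, y ^ 2 ^ i := by
  have hcross : pairPowSum m (x + y) = pairPowSum m x + pairPowSum m y +
      ∑ i ∈ range m, ∑ j ∈ Ioo i m, (x ^ 2 ^ i * y ^ 2 ^ j + x ^ 2 ^ j * y ^ 2 ^ i) := by
    simp only [pairPowSum, add_pow_two_pow_add_two_pow, sum_add_distrib]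
  rw [hcross, sum_range_mul_sum_range]
  simp only [mul_pow]
  linear_combination (pairPowSum m x + pairPowSum m y - ∑ i ∈ range m, x ^ 2 ^ i * y ^ 2 ^ i) *
    CharTwo.two_eq_zero (R := R)

end CharTwo

theorem GaloisField.finrank_zero (p : ℕ) [Fact p.Prime] :
    Module.finrank (ZMod p) (GaloisField p 0) = 1 := by
  have hsplit : Polynomial.IsSplittingField (ZMod p) (GaloisField p 0)
      (Polynomial.X ^ p ^ 0 - Polynomial.X) :=
    Polynomial.IsSplittingField.splittingField _
  rw [← Subalgebra.bot_eq_top_iff_finrank_eq_one, ← hsplit.adjoin_rootSet]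
  simp

theorem algebraMap_tr (n : ℕ) (z : K n) :
    algebraMap (ZMod 2) (K n) (tr n z) =
      ∑ i ∈ range (Module.finrank (ZMod 2) (K n)), z ^ 2 ^ i := by
  rw [tr, FiniteField.algebraMap_trace_eq_sum_pow, Nat.card_zmod]

-- `K 0` is `𝔽₂`, of degree `1` rather than `0`; `Q` is an empty sum in both degrees.
theorem Qf_eq_pairPowSum_finrank (n : ℕ) : Qf n = pairPowSum (Module.finrank (ZMod 2) (K n)) := by
  rcases eq_or_ne n 0 with rfl | hn
  · funext z
    rw [GaloisField.finrank_zero, pairPowSum_one, Qf, range_zero, sum_empty]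
  · rw [GaloisField.finrank 2 hn]
    rfl

theorem stmt6 {n : ℕ} (x y : K n) :
    Qf n x + Qf n y + Qf n (x + y) =
      algebraMap (ZMod 2) (K n) (tr n (x * y) + tr n x * tr n y) := by
  rw [Qf_eq_pairPowSum_finrank, pairPowSum_polar, map_add (algebraMap _ _),
    map_mul (algebraMap _ _), algebraMap_tr, algebraMap_tr, algebraMap_tr]
end
end

section
/- Let f : V → F_2 be a non-degenerate quadratic form on an F_2-vector space V of dimension n, and let W ⊆ V be a maximal totally isotropic subspace (f(w)=0 for all w ∈ W, maximal with this property). Then dim W = n/2 if f is hyperbolic, (n-1)/2 if f is parabolic, and (n-2)/2 if f is elliptic. -/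
noncomputable section

open Finset

variable {V : Type*} [AddCommGroup V] [Module (ZMod 2) V]

/-- The polar form of `f`. -/
def polarF (f : V → ZMod 2) (x y : V) : ZMod 2 := f (x + y) + f x + f y

/-- `f` is a quadratic form over `F_2`: `f 0 = 0` and the polar form is biadditive
(over `F_2` this means bilinear). -/
def IsQuadForm (f : V → ZMod 2) : Prop :=
  f 0 = 0 ∧ (∀ x y z : V, polarF f (x + y) z = polarF f x z + polarF f y z) ∧
    (∀ x y z : V, polarF f x (y + z) = polarF f x y + polarF f x z)

/-- The standard sum of pairs `∑ x_i y_i`. -/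
def PairsForm (v : ℕ) (p : (Fin v → ZMod 2) × (Fin v → ZMod 2)) : ZMod 2 :=
  ∑ i, p.1 i * p.2 i

/-- `f` is equivalent to `∑_{i=1}^v x_i y_i`. -/
def IsHyperbolic (f : V → ZMod 2) : Prop :=
  ∃ (v : ℕ) (e : V ≃ₗ[ZMod 2] ((Fin v → ZMod 2) × (Fin v → ZMod 2))),
    ∀ x, f x = PairsForm v (e x)

/-- `f` is equivalent to `z + ∑_{i=1}^v x_i y_i`. -/
def IsParabolic (f : V → ZMod 2) : Prop :=
  ∃ (v : ℕ) (e : V ≃ₗ[ZMod 2] (ZMod 2 × ((Fin v → ZMod 2) × (Fin v → ZMod 2)))),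
    ∀ x, f x = (e x).1 + PairsForm v (e x).2

/-- `f` is equivalent to `x_1² + x_1 y_1 + y_1² + ∑_{i=2}^v x_i y_i`. -/
def IsElliptic (f : V → ZMod 2) : Prop :=
  ∃ (v : ℕ) (e : V ≃ₗ[ZMod 2] ((ZMod 2 × ZMod 2) × ((Fin v → ZMod 2) × (Fin v → ZMod 2)))),
    ∀ x, f x = (e x).1.1 ^ 2 + (e x).1.1 * (e x).1.2 + (e x).1.2 ^ 2 + PairsForm v (e x).2

/-- The radical of the quadratic form `f`: `rad(B_f) ∩ f⁻¹(0)`. -/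
def radical (f : V → ZMod 2) : Set V := {x : V | (∀ y : V, polarF f x y = 0) ∧ f x = 0}

/-!
Write `ψ a = (-1) ^ a` and `S = ∑ x, ψ (f x)`. Let `d = dim W` and let `P` be the orthogonal
of `W` for the polar form `B`. On a coset `W + x` the form is `w ↦ f x + B w x`, so the sum
over the coset vanishes unless `x ∈ P`; hence `S = ∑_{x ∈ P} ψ (f x)`. By maximality the zeros
of `f` on `P` are exactly `W`, and non-degeneracy gives `dim P = n - d`, so
`S = 2 ^ (d + 1) - 2 ^ (n - d)`. On the other hand `S` is `2 ^ v`, `0` or `-2 ^ (v + 1)` for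
the hyperbolic, parabolic and elliptic normal forms, and comparing the two values
determines `d`.
-/

open Module

lemma eq_zero_or_one_of_zmod_two (a : ZMod 2) : a = 0 ∨ a = 1 := by
  revert a; decide

lemma eq_of_two_pow_add_two_pow_eq_two_pow {a b c : ℕ} (h : 2 ^ a + 2 ^ b = 2 ^ c) : a = b := by
  wlog hab : a ≤ b generalizing a b
  · exact (this (by omega) (le_of_not_ge hab)).symm
  by_contra hne
  have hbc : b < c :=
    (Nat.pow_lt_pow_iff_right (a := 2) (by norm_num)).mp (by have := Nat.two_pow_pos a; omega)
  have h1 : 2 ^ (b + 1) ≤ 2 ^ c := Nat.pow_le_pow_right (by norm_num) hbc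
  have h2 : 2 ^ a < 2 ^ b := Nat.pow_lt_pow_right (by norm_num) (lt_of_le_of_ne hab hne)
  rw [pow_succ] at h1
  omega

def signChar : AddChar (ZMod 2) ℤ := AddChar.zmodChar 2 (ζ := -1) (by norm_num)

@[simp] lemma signChar_one : signChar 1 = -1 := rfl

lemma signChar_eq_one_iff {a : ZMod 2} : signChar a = 1 ↔ a = 0 := by
  revert a; decide

open Classical in
lemma sum_signChar_linearMap {M : Type*} [AddCommGroup M] [Module (ZMod 2) M] [Fintype M]
    (φ : M →ₗ[ZMod 2] ZMod 2) :
    ∑ x, signChar (φ x) = if φ = 0 then (Fintype.card M : ℤ) else 0 := by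
  have hφ : signChar.compAddMonoidHom φ.toAddMonoidHom = 0 ↔ φ = 0 := by
    simp [AddChar.eq_zero_iff, signChar_eq_one_iff, LinearMap.ext_iff]
  simpa only [hφ, AddChar.compAddMonoidHom_apply, LinearMap.toAddMonoidHom_coe] using
    (signChar.compAddMonoidHom φ.toAddMonoidHom).sum_eq_ite

lemma sum_signChar_add {A B : Type*} [Fintype A] [Fintype B] (g : A → ZMod 2) (h : B → ZMod 2) :
    ∑ p : A × B, signChar (g p.1 + h p.2) = (∑ a, signChar (g a)) * ∑ b, signChar (h b) := by
  simp only [Fintype.sum_prod_type, AddChar.map_add_eq_mul, Finset.sum_mul_sum]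

lemma sum_signChar_eq_zero : ∑ a : ZMod 2, signChar a = 0 := by
  decide

lemma sum_signChar_anisotropic :
    ∑ q : ZMod 2 × ZMod 2, signChar (q.1 ^ 2 + q.1 * q.2 + q.2 ^ 2) = -2 := by
  decide

lemma sum_signChar_pairsForm (v : ℕ) : ∑ p, signChar (PairsForm v p) = 2 ^ v := by
  classical
  have hinner : ∀ x : Fin v → ZMod 2,
      ∑ y, signChar (PairsForm v (x, y)) = if x = 0 then 2 ^ v else 0 := by
    intro x
    have h := sum_signChar_linearMap (dotProductBilin (ZMod 2) (ZMod 2) x)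
    simp only [LinearMap.ext_iff, dotProductBilin_apply_apply, LinearMap.zero_apply,
      dotProduct_eq_zero_iff, Fintype.card_fun, ZMod.card, Fintype.card_fin] at h
    exact_mod_cast h
  simp [Fintype.sum_prod_type, hinner]

lemma IsHyperbolic.exists_sum_signChar_eq [Fintype V] {f : V → ZMod 2} (h : IsHyperbolic f) :
    ∃ v : ℕ, ∑ x, signChar (f x) = 2 ^ v := by
  obtain ⟨v, e, he⟩ := h
  refine ⟨v, ?_⟩
  simp only [he]
  exact (Fintype.sum_equiv e.toEquiv _ _ fun _ => rfl).trans (sum_signChar_pairsForm v)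

lemma IsParabolic.sum_signChar_eq_zero [Fintype V] {f : V → ZMod 2} (h : IsParabolic f) :
    ∑ x, signChar (f x) = 0 := by
  obtain ⟨v, e, he⟩ := h
  simp only [he]
  refine (Fintype.sum_equiv e.toEquiv _ (fun p => signChar (p.1 + PairsForm v p.2))
    fun _ => rfl).trans ?_
  rw [sum_signChar_add (fun z => z) (PairsForm v), _root_.sum_signChar_eq_zero, zero_mul]

lemma IsElliptic.exists_sum_signChar_eq [Fintype V] {f : V → ZMod 2} (h : IsElliptic f) :
    ∃ v : ℕ, finrank (ZMod 2) V = 2 * v + 2 ∧ ∑ x, signChar (f x) = -2 ^ (v + 1) := by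
  obtain ⟨v, e, he⟩ := h
  refine ⟨v, ?_, ?_⟩
  · simp [e.finrank_eq, finrank_prod]
    ring
  simp only [he]
  refine (Fintype.sum_equiv e.toEquiv _
      (fun p => signChar (p.1.1 ^ 2 + p.1.1 * p.1.2 + p.1.2 ^ 2 + PairsForm v p.2))
      fun _ => rfl).trans ?_
  rw [sum_signChar_add (fun q : ZMod 2 × ZMod 2 => q.1 ^ 2 + q.1 * q.2 + q.2 ^ 2) (PairsForm v),
    sum_signChar_anisotropic, sum_signChar_pairsForm]
  ring

lemma apply_add_eq_add_add_polarF {G : Type*} [AddCommGroup G] (f : G → ZMod 2) (x y : G) :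
    f (x + y) = f x + f y + polarF f x y := by
  unfold polarF
  grind

lemma polarF_smul_left {f : V → ZMod 2} (h0 : f 0 = 0) (c : ZMod 2) (x y : V) :
    polarF f (c • x) y = c • polarF f x y := by
  rcases eq_zero_or_one_of_zmod_two c with rfl | rfl
  · simp [polarF, h0, CharTwo.add_self_eq_zero]
  · simp

lemma polarF_smul_right {f : V → ZMod 2} (h0 : f 0 = 0) (c : ZMod 2) (x y : V) :
    polarF f x (c • y) = c • polarF f x y := by
  rcases eq_zero_or_one_of_zmod_two c with rfl | rfl
  · simp [polarF, h0, CharTwo.add_self_eq_zero]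
  · simp

namespace IsQuadForm

variable {f : V → ZMod 2} {W : Submodule (ZMod 2) V}

def polarBilin (hf : IsQuadForm f) : LinearMap.BilinForm (ZMod 2) V :=
  LinearMap.mk₂ (ZMod 2) (polarF f) hf.2.1 (polarF_smul_left hf.1) hf.2.2 (polarF_smul_right hf.1)

@[simp] lemma polarBilin_apply (hf : IsQuadForm f) (x y : V) :
    hf.polarBilin x y = polarF f x y := rfl

lemma le_orthogonal (hf : IsQuadForm f) (hiso : ∀ w ∈ W, f w = 0) :
    W ≤ hf.polarBilin.orthogonal W := by
  intro x hx
  rw [LinearMap.BilinForm.mem_orthogonal_iff]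
  intro w hw
  simp [polarF, hiso w hw, hiso x hx, hiso _ (W.add_mem hw hx)]

lemma finrank_add_finrank_orthogonal [FiniteDimensional (ZMod 2) V] (hf : IsQuadForm f)
    (hnd : radical f = {0}) (hiso : ∀ w ∈ W, f w = 0) :
    finrank (ZMod 2) W + finrank (ZMod 2) (hf.polarBilin.orthogonal W) = finrank (ZMod 2) V := by
  have hker : W ⊓ LinearMap.ker hf.polarBilin = ⊥ := by
    refine (Submodule.eq_bot_iff _).mpr fun x ⟨hxW, hxker⟩ => ?_
    have hrad : x ∈ radical f := ⟨fun y => LinearMap.congr_fun hxker y, hiso x hxW⟩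
    rwa [hnd] at hrad
  have h := LinearMap.BilinForm.finrank_add_finrank_orthogonal' (B := hf.polarBilin) W
  rwa [hker, finrank_bot, add_zero] at h

lemma mem_of_mem_orthogonal (hf : IsQuadForm f) (hiso : ∀ w ∈ W, f w = 0)
    (hmax : ∀ W' : Submodule (ZMod 2) V, (∀ w ∈ W', f w = 0) → W ≤ W' → W' = W) {x : V}
    (hx : x ∈ hf.polarBilin.orthogonal W) (hfx : f x = 0) : x ∈ W := by
  have hiso' : ∀ y ∈ W ⊔ (ZMod 2) ∙ x, f y = 0 := by
    intro y hy
    obtain ⟨w, hw, _, hs, rfl⟩ := Submodule.mem_sup.mp hy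
    obtain ⟨c, rfl⟩ := Submodule.mem_span_singleton.mp hs
    rcases eq_zero_or_one_of_zmod_two c with rfl | rfl
    · simpa using hiso w hw
    · have hwx : polarF f w x = 0 := LinearMap.BilinForm.mem_orthogonal_iff.mp hx w hw
      rw [one_smul, apply_add_eq_add_add_polarF f, hiso w hw, hfx, hwx, add_zero, add_zero]
  rw [← hmax _ hiso' le_sup_left]
  exact Submodule.mem_sup_right (Submodule.mem_span_singleton_self x)

open Classical in
lemma sum_signChar_apply_add [Fintype V] (hf : IsQuadForm f) (hiso : ∀ w ∈ W, f w = 0) (x : V) :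
    ∑ w : W, signChar (f (w + x)) =
      if x ∈ hf.polarBilin.orthogonal W then Fintype.card W * signChar (f x) else 0 := by
  have hsplit : ∀ w : W, signChar (f (w + x)) =
      signChar (f x) * signChar ((hf.polarBilin.flip x ∘ₗ W.subtype) w) := by
    intro w
    rw [apply_add_eq_add_add_polarF f, hiso w w.2, zero_add, AddChar.map_add_eq_mul]
    rfl
  have hperp : hf.polarBilin.flip x ∘ₗ W.subtype = 0 ↔ x ∈ hf.polarBilin.orthogonal W := by
    simp [LinearMap.ext_iff, LinearMap.BilinForm.mem_orthogonal_iff]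
  simp only [hsplit, ← Finset.mul_sum, sum_signChar_linearMap, hperp]
  split_ifs <;> ring

open Classical in
lemma sum_signChar_eq_sum_orthogonal [Fintype V] (hf : IsQuadForm f) (hiso : ∀ w ∈ W, f w = 0) :
    ∑ x, signChar (f x) =
      ∑ x, if x ∈ hf.polarBilin.orthogonal W then signChar (f x) else 0 := by
  have hcard : (Fintype.card W : ℤ) ≠ 0 := by exact_mod_cast Fintype.card_ne_zero
  have hshift : ∀ w : W, ∑ x, signChar (f (w + x)) = ∑ x, signChar (f x) := fun w =>
    Fintype.sum_equiv (Equiv.addLeft (w : V)) _ _ fun _ => rfl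
  apply mul_left_cancel₀ hcard
  calc (Fintype.card W : ℤ) * ∑ x, signChar (f x)
      = ∑ w : W, ∑ x, signChar (f (w + x)) := by
        simp only [hshift, Finset.sum_const, Finset.card_univ, nsmul_eq_mul]
    _ = ∑ x, ∑ w : W, signChar (f (w + x)) := Finset.sum_comm
    _ = Fintype.card W * ∑ x, if x ∈ hf.polarBilin.orthogonal W then signChar (f x) else 0 := by
        simp only [hf.sum_signChar_apply_add hiso, Finset.mul_sum, mul_ite, mul_zero]

lemma sum_signChar_eq_two_pow_sub_two_pow [Fintype V] (hf : IsQuadForm f)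
    (hiso : ∀ w ∈ W, f w = 0)
    (hmax : ∀ W' : Submodule (ZMod 2) V, (∀ w ∈ W', f w = 0) → W ≤ W' → W' = W) :
    ∑ x, signChar (f x) =
      2 ^ (finrank (ZMod 2) W + 1) - 2 ^ finrank (ZMod 2) (hf.polarBilin.orthogonal W) := by
  classical
  set P := hf.polarBilin.orthogonal W
  have hpt : ∀ x, (if x ∈ P then signChar (f x) else 0) =
      2 * (if x ∈ W then 1 else 0) - (if x ∈ P then 1 else 0) := by
    intro x
    by_cases hxP : x ∈ P
    · by_cases hxW : x ∈ W
      · simp [hxP, hxW, hiso x hxW]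
      · have hfx : f x = 1 := (eq_zero_or_one_of_zmod_two _).resolve_left
          fun h => hxW (hf.mem_of_mem_orthogonal hiso hmax hxP h)
        simp [hxP, hxW, hfx]
    · have hxW : x ∉ W := fun h => hxP (hf.le_orthogonal hiso h)
      simp [hxP, hxW]
  rw [hf.sum_signChar_eq_sum_orthogonal hiso, Finset.sum_congr rfl fun x _ => hpt x,
    Finset.sum_sub_distrib, ← Finset.mul_sum, Finset.sum_boole, Finset.sum_boole,
    ← Fintype.card_subtype, ← Fintype.card_subtype, card_eq_pow_finrank (K := ZMod 2),
    card_eq_pow_finrank (K := ZMod 2) (V := P), ZMod.card]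
  push_cast
  ring

end IsQuadForm

theorem stmt11 [FiniteDimensional (ZMod 2) V] {n : ℕ}
    (hn : Module.finrank (ZMod 2) V = n)
    (f : V → ZMod 2) (hf : IsQuadForm f)
    (hnd : radical f = {0})
    (W : Submodule (ZMod 2) V)
    (hiso : ∀ w ∈ W, f w = 0)
    (hmax : ∀ W' : Submodule (ZMod 2) V, (∀ w ∈ W', f w = 0) → W ≤ W' → W' = W) :
    (IsHyperbolic f → 2 * Module.finrank (ZMod 2) W = n) ∧
    (IsParabolic f → 2 * Module.finrank (ZMod 2) W + 1 = n) ∧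
    (IsElliptic f → 2 * Module.finrank (ZMod 2) W + 2 = n) := by
  have : Fintype V := @Fintype.ofFinite V (Module.finite_of_finite (ZMod 2))
  set d := finrank (ZMod 2) W
  set k := finrank (ZMod 2) (hf.polarBilin.orthogonal W)
  have hdk : d + k = n := hn ▸ hf.finrank_add_finrank_orthogonal hnd hiso
  have hdk_le : d ≤ k := Submodule.finrank_mono (hf.le_orthogonal hiso)
  have hS := hf.sum_signChar_eq_two_pow_sub_two_pow hiso hmax
  refine ⟨fun h => ?_, fun h => ?_, fun h => ?_⟩
  · obtain ⟨v, hv⟩ := h.exists_sum_signChar_eq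
    have hlt : (2 : ℤ) ^ k < 2 ^ (d + 1) := by linarith [pow_pos (two_pos (α := ℤ)) v]
    have := (pow_lt_pow_iff_right₀ one_lt_two).mp hlt
    omega
  · have heq : (2 : ℤ) ^ k = 2 ^ (d + 1) := by linarith [h.sum_signChar_eq_zero]
    have := pow_right_injective₀ two_pos (by norm_num) heq
    omega
  · obtain ⟨v, hv_dim, hv⟩ := h.exists_sum_signChar_eq
    have heq : 2 ^ (d + 1) + 2 ^ (v + 1) = 2 ^ k := by
      exact_mod_cast (by linarith : (2 : ℤ) ^ (d + 1) + 2 ^ (v + 1) = 2 ^ k)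
    have := eq_of_two_pow_add_two_pow_eq_two_pow heq
    omega
end
end

section
/- Let V be an F_2-subspace of F_{2^n} of dimension k such that K_n(a) = 0 for all a ∈ V. Assuming the identity Σ_{a∈V}(K_n(a)^2 - K_n(a)) = 2^{n+k} - 2^{n+1} + 2^k Σ_{u∈V^⊥} K_n(u^{-1}) and the Weil bound |K_n(a)| ≤ 2^{n/2+1}, it follows that k ≤ n/2 + 1 for n ≥ 3. -/
noncomputable section

noncomputable instance {n : ℕ} (V : Submodule (ZMod 2) (K n)) : Fintype V :=
  Fintype.ofFinite _

/-!
Since `K_n` vanishes on `V`, the identity reads `2^(n+k) = 2^(n+1) - 2^k S` with `S` the sum of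
`K_n(u⁻¹)` over the `2^(n-k)` elements `u` of `V^⊥`. The Weil bound gives `|S| ≤ 2^(n-k) c` with
`c = 2^(n/2+1)`, hence `2^k ≤ 2 + c`. If `2k ≥ n + 3`, squaring gives `2c² ≤ (2 + c)²`, which is
impossible since `c² = 2^(n+2) ≥ 32`.
-/

theorem abs_sum_le_card_mul {ι : Type*} [Fintype ι] (f : ι → ℝ) {B : ℝ}
    (hf : ∀ i, |f i| ≤ B) : |∑ i, f i| ≤ Fintype.card ι * B := by
  calc |∑ i, f i| ≤ ∑ i, |f i| := Finset.abs_sum_le_sum_abs _ _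
    _ ≤ Fintype.card ι * B := by
      simpa using Finset.sum_le_card_nsmul Finset.univ _ B fun i _ => hf i

theorem two_pow_le_two_add_of_eq_of_abs_le {n k : ℕ} (hkn : k ≤ n) {S c : ℝ}
    (hiden : 0 = 2 ^ (n + k) - 2 ^ (n + 1) + 2 ^ k * S) (hS : |S| ≤ 2 ^ (n - k) * c) :
    (2 : ℝ) ^ k ≤ 2 + c := by
  have hSk : -(2 ^ k * S) ≤ 2 ^ n * c := by
    calc -(2 ^ k * S) ≤ 2 ^ k * |S| := by
          rw [← mul_neg]; exact mul_le_mul_of_nonneg_left (neg_le_abs S) (by positivity)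
      _ ≤ 2 ^ k * (2 ^ (n - k) * c) := mul_le_mul_of_nonneg_left hS (by positivity)
      _ = 2 ^ n * c := by rw [← mul_assoc, ← pow_add, Nat.add_sub_cancel' hkn]
  have h : (2 : ℝ) ^ n * 2 ^ k ≤ 2 ^ n * (2 + c) := by
    rw [← pow_add, mul_add, ← pow_succ]; linarith
  exact le_of_mul_le_mul_left h (by positivity)

theorem le_half_add_one_of_two_pow_le {n k : ℕ} (hn : 3 ≤ n)
    (h : (2 : ℝ) ^ k ≤ 2 + 2 ^ ((n : ℝ) / 2 + 1)) : (k : ℝ) ≤ n / 2 + 1 := by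
  set c : ℝ := 2 ^ ((n : ℝ) / 2 + 1)
  have hc : c ^ 2 = 2 ^ (n + 2) := by
    rw [← Real.rpow_mul_natCast zero_le_two, ← Real.rpow_natCast]; push_cast; ring_nf
  by_contra! hk
  have h2k : n + 3 ≤ 2 * k := by
    have : (n : ℝ) + 2 < 2 * k := by linarith
    exact_mod_cast this
  have hsq : 2 * c ^ 2 ≤ (2 + c) ^ 2 := by
    calc 2 * c ^ 2 = 2 ^ (n + 3) := by rw [hc]; ring
      _ ≤ 2 ^ (2 * k) := pow_le_pow_right₀ one_le_two h2k
      _ = (2 ^ k) ^ 2 := by ring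
      _ ≤ (2 + c) ^ 2 := pow_le_pow_left₀ (by positivity) h 2
  have h32 : (32 : ℝ) ≤ c ^ 2 := by
    rw [hc]; calc (32 : ℝ) = 2 ^ (3 + 2) := by norm_num
      _ ≤ 2 ^ (n + 2) := pow_le_pow_right₀ one_le_two (by omega)
  nlinarith [show 0 < c by positivity]

theorem stmt18 {n k : ℕ} (hn : 3 ≤ n)
    (V P : Submodule (ZMod 2) (K n))
    (hk : Module.finrank (ZMod 2) V = k)
    (hzero : ∀ a ∈ V, Kl n a = 0)
    (hP : (P : Set (K n)) = {x : K n | ∀ v ∈ V, tr n (v * x) = 0})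
    (hiden : ∑ a : V, (Kl n (a : K n) ^ 2 - Kl n (a : K n))
        = 2^(n+k) - 2^(n+1) + 2^k * ∑ u : P, Kl n ((u : K n)⁻¹))
    (hweil : ∀ a : K n, (|Kl n a| : ℝ) ≤ 2 ^ ((n : ℝ)/2 + 1)) :
    (k : ℝ) ≤ (n : ℝ)/2 + 1 := by
  have hdim : Module.finrank (ZMod 2) (K n) = n := GaloisField.finrank 2 (by omega)
  have hPV : P = (Algebra.traceForm (ZMod 2) (K n)).orthogonal V :=
    SetLike.coe_injective (hP.trans rfl)
  have hcardP : Fintype.card P = 2 ^ (n - k) := by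
    rw [Module.card_eq_pow_finrank (K := ZMod 2), ZMod.card, hPV,
      LinearMap.BilinForm.finrank_orthogonal (traceForm_nondegenerate _ _), hdim, hk]
  have hkn : k ≤ n := hk ▸ V.finrank_le.trans_eq hdim
  rw [Finset.sum_eq_zero fun a _ => by rw [hzero a a.2]; ring] at hiden
  have hS : |∑ u : P, (Kl n u⁻¹ : ℝ)| ≤ 2 ^ (n - k) * 2 ^ ((n : ℝ) / 2 + 1) := by
    simpa [hcardP] using abs_sum_le_card_mul _ fun u : P => hweil _
  exact le_half_add_one_of_two_pow_le hn
    (two_pow_le_two_add_of_eq_of_abs_le hkn (by exact_mod_cast hiden) hS)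
end
end
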